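/- For all sufficiently large integers n, no mp2s-automaton over the data set D_n with at most 2^{⌈n^{1/3}⌉} states, at most ⌈n^{1/5}⌉ forward heads on each of the two input streams, and no backward heads solves the set disjointness problem Disj_n. -/

import Mathlib

/-- An mp2s-automaton with data set `D`, `m` states, `kf` forward heads and `kb` backward
heads on each of the two input streams.  The heads are indexed by `Fin (2*kf + 2*kb)`:
indices `< kf` are the forward heads on the first stream, indices in `[kf, 2*kf)` are the
forward heads on the second stream, indices in `[2*kf, 2*kf + kb)` are the backward heads
on the first stream, and the remaining indices are the backward heads on the second stream.
In the transition function, `none` plays the role of the special symbol `end`, and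
`true`/`false` mean `advance`/`stay`. -/
structure MP2S (D : Type) (m kf kb : ℕ) where
  /-- the state space -/
  Q : Type
  [fintypeQ : Fintype Q]
  cardQ : Fintype.card Q = m
  /-- the designated start state -/
  start : Q
  /-- the designated set of accepting states -/
  accept : Set Q
  /-- the deterministic transition function -/
  δ : Q → (Fin (2*kf + 2*kb) → Option D) → Q × (Fin (2*kf + 2*kb) → Bool)

namespace MP2S

attribute [instance] fintypeQ

variable {D : Type} {m kf kb : ℕ}

/-- The input stream that head `i` moves over (`S` or `T`). -/
def streamOf (S T : List D) (i : Fin (2*kf + 2*kb)) : List D :=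
  if i.val < kf ∨ (2*kf ≤ i.val ∧ i.val < 2*kf + kb) then S else T

/-- The symbol currently observed by head `i`, where `pos i` counts the number of
advances head `i` has made so far; forward heads read their stream from left to right,
backward heads from right to left, and `none` (the `end` symbol) is observed once the
head has been advanced beyond the last element it can access. -/
def obs (S T : List D) (pos : Fin (2*kf + 2*kb) → ℕ) (i : Fin (2*kf + 2*kb)) : Option D :=
  let L := streamOf S T i
  if pos i < L.length then
    if i.val < 2*kf then L[pos i]? else L[L.length - 1 - pos i]?
  else none

/-- All heads have passed their entire stream. -/
def Done (S T : List D) (pos : Fin (2*kf + 2*kb) → ℕ) : Prop :=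
  ∀ i, (streamOf S T i).length ≤ pos i

instance (S T : List D) (pos : Fin (2*kf + 2*kb) → ℕ) : Decidable (Done S T pos) :=
  inferInstanceAs (Decidable (∀ i, (streamOf S T i).length ≤ pos i))

/-- One computation step of the automaton on input `(S, T)`; a configuration consists of
the current state together with the number of advances each head has made so far.
Once every head has passed its entire stream the computation has ended and the
configuration stays unchanged. -/
def step (A : MP2S D m kf kb) (S T : List D) (c : A.Q × (Fin (2*kf + 2*kb) → ℕ)) :
    A.Q × (Fin (2*kf + 2*kb) → ℕ) :=
  if Done S T c.2 then c
  else
    let r := A.δ c.1 (obs S T c.2)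
    (r.1, fun i => if r.2 i then min (c.2 i + 1) (streamOf S T i).length else c.2 i)

/-- The configuration of the automaton on input `(S, T)` after `t` steps, starting from
the initial configuration. -/
def run (A : MP2S D m kf kb) (S T : List D) (t : ℕ) : A.Q × (Fin (2*kf + 2*kb) → ℕ) :=
  (A.step S T)^[t] (A.start, fun _ => 0)

/-- The automaton accepts the input `(S, T)` if its computation ends (i.e., every head has
passed its entire stream) in an accepting state. -/
def Accepts (A : MP2S D m kf kb) (S T : List D) : Prop :=
  ∃ t, Done S T (A.run S T t).2 ∧ (A.run S T t).1 ∈ A.accept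

/-- The fixed data set `D_n` of `2n` distinct items: `(i, false)` plays the role of `a_i`
and `(i, true)` plays the role of `b_i`. -/
abbrev Dn (n : ℕ) : Type := Fin n × Bool

/-- The automaton solves the set disjointness problem `Disj_n`: for all input streams
`S`, `T` over `D_n` of length `n`, it accepts iff the sets of elements occurring in `S`
and in `T` are disjoint. -/
def SolvesDisj (n : ℕ) (A : MP2S (Dn n) m kf kb) : Prop :=
  ∀ S T : List (Dn n), S.length = n → T.length = n →
    (A.Accepts S T ↔ ∀ x ∈ S, x ∉ T)

end MP2S


namespace DisjProof
open MP2S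

variable {D : Type} {m kf : ℕ}

lemma head_lt2kf (i : Fin (2*kf + 2*0)) : i.val < 2*kf := by
  have := i.isLt; omega

lemma streamOf_eq (S T : List D) (i : Fin (2*kf + 2*0)) :
    streamOf S T i = if i.val < kf then S else T := by
  unfold streamOf
  have : (i.val < kf ∨ (2*kf ≤ i.val ∧ i.val < 2*kf + 0)) ↔ i.val < kf := by omega
  simp only [this]

lemma run_succ (A : MP2S D m kf 0) (S T : List D) (t : ℕ) :
    A.run S T (t+1) = A.step S T (A.run S T t) := by
  unfold MP2S.run
  rw [Function.iterate_succ_apply']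

lemma run_zero (A : MP2S D m kf 0) (S T : List D) :
    A.run S T 0 = (A.start, fun _ => 0) := rfl

lemma pos_le_len (A : MP2S D m kf 0) (S T : List D) (t : ℕ) (i : Fin (2*kf + 2*0)) :
    (A.run S T t).2 i ≤ (streamOf S T i).length := by
  induction t with
  | zero => simp [run_zero]
  | succ t ih =>
    rw [run_succ]
    unfold MP2S.step
    by_cases h : Done S T (A.run S T t).2
    · simpa [h] using ih
    · simp only [h, if_neg, if_false]
      by_cases hb : (A.δ (A.run S T t).1 (obs S T (A.run S T t).2)).2 i
      · simp [hb]
      · simpa [hb] using ih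

lemma pos_step_le (A : MP2S D m kf 0) (S T : List D) (t : ℕ) (i : Fin (2*kf + 2*0)) :
    (A.run S T t).2 i ≤ (A.run S T (t+1)).2 i := by
  rw [run_succ]
  unfold MP2S.step
  by_cases h : Done S T (A.run S T t).2
  · simp [h]
  · simp only [h, if_neg, if_false]
    by_cases hb : (A.δ (A.run S T t).1 (obs S T (A.run S T t).2)).2 i
    · simp only [hb, if_true]
      exact le_min (Nat.le_succ _) (pos_le_len A S T t i)
    · simp [hb]

lemma pos_mono (A : MP2S D m kf 0) (S T : List D) {t t' : ℕ} (h : t ≤ t')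
    (i : Fin (2*kf + 2*0)) : (A.run S T t).2 i ≤ (A.run S T t').2 i := by
  induction t' with
  | zero =>
    have : t = 0 := by omega
    subst this; exact le_refl _
  | succ t' ih =>
    rcases Nat.lt_or_ge t (t'+1) with h' | h'
    · exact le_trans (ih (by omega)) (pos_step_le A S T t' i)
    · have : t = t' + 1 := by omega
      subst this; rfl

lemma done_frozen (A : MP2S D m kf 0) (S T : List D) {t t' : ℕ}
    (hd : Done S T (A.run S T t).2) (h : t ≤ t') : A.run S T t' = A.run S T t := by
  induction t' with
  | zero => have : t = 0 := by omega
            subst this; rfl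
  | succ t' ih =>
    rcases Nat.lt_or_ge t (t'+1) with h' | h'
    · have he := ih (by omega)
      rw [run_succ, he]
      unfold MP2S.step
      simp [hd]
    · have : t = t' + 1 := by omega
      subst this; rfl

lemma accepts_state (A : MP2S D m kf 0) (S T : List D) (hacc : A.Accepts S T) {t : ℕ}
    (hd : Done S T (A.run S T t).2) : (A.run S T t).1 ∈ A.accept := by
  obtain ⟨τ, hτd, hτa⟩ := hacc
  rcases le_total t τ with h | h
  · rw [done_frozen A S T hd h] at hτa; exact hτa
  · rw [done_frozen A S T hτd h]; exact hτa

lemma obs_congr (S T S' T' : List D)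
    (hl : ∀ i : Fin (2*kf + 2*0), (streamOf S T i).length = (streamOf S' T' i).length)
    (pos : Fin (2*kf + 2*0) → ℕ)
    (h : ∀ i : Fin (2*kf + 2*0), (streamOf S T i)[pos i]? = (streamOf S' T' i)[pos i]?) :
    obs S T pos = obs S' T' pos := by
  funext i
  unfold MP2S.obs
  simp only [head_lt2kf i, if_true, ← hl i, h i]

lemma step_congr (A : MP2S D m kf 0) (S T S' T' : List D)
    (hl : ∀ i : Fin (2*kf + 2*0), (streamOf S T i).length = (streamOf S' T' i).length)
    (γ : A.Q × (Fin (2*kf + 2*0) → ℕ))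
    (h : ∀ i : Fin (2*kf + 2*0), (streamOf S T i)[γ.2 i]? = (streamOf S' T' i)[γ.2 i]?) :
    A.step S T γ = A.step S' T' γ := by
  have hdone : Done S T γ.2 ↔ Done S' T' γ.2 := by
    unfold MP2S.Done
    constructor <;> intro hd i
    · rw [← hl i]; exact hd i
    · rw [hl i]; exact hd i
  unfold MP2S.step
  by_cases hd : Done S T γ.2
  · simp [hd, hdone.mp hd]
  · have hd' : ¬ Done S' T' γ.2 := fun hx => hd (hdone.mpr hx)
    simp only [hd, hd', if_false]
    rw [obs_congr S T S' T' hl γ.2 h]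
    congr 1
    funext i
    rw [hl i]

/-! ### Streams -/

variable {n : ℕ}

/-- block-reversing involution on positions -/
def mp (B L p : ℕ) : ℕ := if p < B*L then (B-1-p/L)*L + p%L else p

lemma mp_lt {B L p : ℕ} (hL : 0 < L) (hBL : B*L ≤ n) (hp : p < n) : mp B L p < n := by
  unfold mp
  by_cases h : p < B*L
  · simp only [h, if_true]
    have h1 : B - 1 - p/L ≤ B - 1 := Nat.sub_le _ _
    have h2 : p % L < L := Nat.mod_lt _ hL
    have hB : 0 < B := by
      rcases Nat.eq_zero_or_pos B with h0 | h0
      · subst h0; simp at h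
      · exact h0
    have : (B-1-p/L)*L + p%L < (B-1)*L + L :=
      Nat.add_lt_add_of_le_of_lt (Nat.mul_le_mul_right _ h1) h2
    have : (B-1)*L + L = B*L := by
      have : B - 1 + 1 = B := Nat.succ_pred_eq_of_pos hB
      calc (B-1)*L + L = (B-1+1)*L := by ring
        _ = B*L := by rw [this]
    omega
  · simpa [h] using hp

lemma mp_invol {B L p : ℕ} (hL : 0 < L) : mp B L (mp B L p) = p := by
  unfold mp
  by_cases h : p < B*L
  · simp only [h, if_true]
    have hB : 0 < B := by
      rcases Nat.eq_zero_or_pos B with h0 | h0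
      · subst h0; simp at h
      · exact h0
    have hg : p/L < B := Nat.div_lt_iff_lt_mul hL |>.mpr (by omega)
    have hr : p % L < L := Nat.mod_lt _ hL
    obtain ⟨g, hgdef⟩ : ∃ g, p/L = g := ⟨_, rfl⟩
    obtain ⟨r, hrdef⟩ : ∃ r, p%L = r := ⟨_, rfl⟩
    rw [hgdef] at hg
    rw [hrdef] at hr
    rw [hgdef, hrdef]
    have hq : (B-1-g)*L + r < B*L := by
      have h1 : B-1-g ≤ B-1 := Nat.sub_le _ _
      have : (B-1-g)*L + r < (B-1)*L + L :=
        Nat.add_lt_add_of_le_of_lt (Nat.mul_le_mul_right _ h1) hr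
      have h2 : (B-1)*L + L = B*L := by
        have hB1 : B - 1 + 1 = B := Nat.succ_pred_eq_of_pos hB
        calc (B-1)*L + L = (B-1+1)*L := by ring
          _ = B*L := by rw [hB1]
      omega
    simp only [hq, if_true]
    have hdiv : ((B-1-g)*L + r) / L = B-1-g := by
      rw [Nat.add_comm, Nat.add_mul_div_right _ _ hL, Nat.div_eq_of_lt hr, Nat.zero_add]
    have hmod : ((B-1-g)*L + r) % L = r := by
      rw [Nat.add_comm, Nat.add_mul_mod_self_right, Nat.mod_eq_of_lt hr]
    rw [hdiv, hmod]
    have : B - 1 - (B - 1 - g) = g := by omega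
    rw [this, ← hgdef, ← hrdef]
    exact (Nat.div_add_mod' p L)
  · simp [h]

def mpF {n : ℕ} (B L : ℕ) (hL : 0 < L) (hBL : B*L ≤ n) (p : Fin n) : Fin n :=
  ⟨mp B L p.val, mp_lt hL hBL p.2⟩

lemma mpF_invol {n B L : ℕ} (hL : 0 < L) (hBL : B*L ≤ n) (p : Fin n) :
    mpF B L hL hBL (mpF B L hL hBL p) = p := by
  apply Fin.ext
  exact mp_invol hL

/-- first stream -/
def Sstr (n : ℕ) (c : Fin n → Bool) : List (Dn n) := List.ofFn fun p => (p, c p)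

/-- second stream: block-reversed complement -/
def Tstr (n B L : ℕ) (hL : 0 < L) (hBL : B*L ≤ n) (c : Fin n → Bool) : List (Dn n) :=
  List.ofFn fun p => (mpF B L hL hBL p, ! c (mpF B L hL hBL p))

lemma length_Sstr (n : ℕ) (c : Fin n → Bool) : (Sstr n c).length = n := by
  simp [Sstr]

lemma length_Tstr (n B L : ℕ) (hL : 0 < L) (hBL : B*L ≤ n) (c : Fin n → Bool) :
    (Tstr n B L hL hBL c).length = n := by
  simp [Tstr]

lemma mem_Tstr {n B L : ℕ} {hL : 0 < L} {hBL : B*L ≤ n} {c : Fin n → Bool}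
    (q : Fin n) : (q, ! c q) ∈ Tstr n B L hL hBL c := by
  unfold Tstr
  rw [List.mem_ofFn]
  refine ⟨mpF B L hL hBL q, ?_⟩
  simp [mpF_invol hL hBL q]

lemma disjoint_STstr (n B L : ℕ) (hL : 0 < L) (hBL : B*L ≤ n) (c : Fin n → Bool) :
    ∀ x ∈ Sstr n c, x ∉ Tstr n B L hL hBL c := by
  intro x hx hx'
  unfold Sstr at hx
  unfold Tstr at hx'
  rw [List.mem_ofFn] at hx hx'
  obtain ⟨p, hp⟩ := hx
  obtain ⟨q, hq⟩ := hx'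
  rw [← hp] at hq
  have h1 : mpF B L hL hBL q = p := congrArg Prod.fst hq
  have h2 : (! c (mpF B L hL hBL q)) = c p := congrArg Prod.snd hq
  rw [h1] at h2
  simp at h2

/-- membership of a position in block `J` -/
def inBlk (L J p : ℕ) : Prop := J*L ≤ p ∧ p < J*L + L

instance (L J p : ℕ) : Decidable (inBlk L J p) := by unfold inBlk; infer_instance

lemma inBlk_lt {B L I p : ℕ} (hBL : B*L ≤ n) (hI : I < B) (h : inBlk L I p) : p < n := by
  obtain ⟨h1, h2⟩ := h
  have : I*L + L ≤ B*L := by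
    have : (I+1)*L ≤ B*L := Nat.mul_le_mul_right _ (by omega)
    calc I*L + L = (I+1)*L := by ring
      _ ≤ B*L := this
  omega

lemma inBlk_unique {L J J' p : ℕ} (h : inBlk L J p) (h' : inBlk L J' p) : J = J' := by
  obtain ⟨h1, h2⟩ := h
  obtain ⟨h3, h4⟩ := h'
  rcases Nat.lt_trichotomy J J' with hlt | heq | hgt
  · exfalso
    have : (J+1)*L ≤ J'*L := Nat.mul_le_mul_right _ (by omega)
    have : J*L + L ≤ J'*L := by calc J*L + L = (J+1)*L := by ring
                                    _ ≤ J'*L := this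
    omega
  · exact heq
  · exfalso
    have : (J'+1)*L ≤ J*L := Nat.mul_le_mul_right _ (by omega)
    have : J'*L + L ≤ J*L := by calc J'*L + L = (J'+1)*L := by ring
                                    _ ≤ J*L := this
    omega

lemma inBlk_div {L p : ℕ} (hL : 0 < L) : inBlk L (p/L) p := by
  have h1 : L * (p/L) + p % L = p := Nat.div_add_mod p L
  have hm : p % L < L := Nat.mod_lt p hL
  have h2 : p/L*L = L*(p/L) := Nat.mul_comm _ _
  constructor <;> omega

lemma inBlk_sandwich {L J p₁ p₂ p : ℕ} (h1 : inBlk L J p₁) (h2 : inBlk L J p₂)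
    (ha : p₁ ≤ p) (hb : p ≤ p₂) : inBlk L J p := by
  obtain ⟨x1, x2⟩ := h1; obtain ⟨x3, x4⟩ := h2; exact ⟨by omega, by omega⟩

/-- `mp` maps positions outside block `B-1-I` to positions outside block `I` -/
lemma mp_not_inBlk {B L I p : ℕ} (hL : 0 < L) (hI : I < B) (h : ¬ inBlk L (B-1-I) p) : ¬ inBlk L I (mp B L p) := by
  intro hcon
  unfold mp at hcon
  by_cases h2 : p < B*L
  · simp only [h2, if_true] at hcon
    have hg : p/L < B := (Nat.div_lt_iff_lt_mul hL).mpr (by omega)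
    have hblk : inBlk L (B-1-p/L) ((B-1-p/L)*L + p%L) :=
      ⟨le_refl _ |>.trans (Nat.le_add_right _ _), by
        have := Nat.mod_lt p hL; omega⟩
    have := inBlk_unique hcon hblk
    have hgI : B-1-p/L = I := this.symm
    have : p/L = B-1-I := by omega
    exact h (this ▸ inBlk_div hL)
  · simp only [h2, if_false] at hcon
    have hB : 0 < B := by omega
    have hIL : I*L + L ≤ B*L := by
      have h5 : (I+1)*L ≤ B*L := Nat.mul_le_mul_right _ (by omega)
      have h6 : (I+1)*L = I*L + L := by ring
      omega
    obtain ⟨x1, x2⟩ := hcon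
    omega

/-! ### Mode predicates and step congruences -/

/-- some first-stream head is in block `I` -/
def modeAP (kf L I : ℕ) (pos : Fin (2*kf + 2*0) → ℕ) : Prop :=
  ∃ i : Fin (2*kf + 2*0), i.val < kf ∧ inBlk L I (pos i)

/-- some second-stream head is in block `B-1-I` -/
def modeBP (kf B L I : ℕ) (pos : Fin (2*kf + 2*0) → ℕ) : Prop :=
  ∃ i : Fin (2*kf + 2*0), kf ≤ i.val ∧ inBlk L (B-1-I) (pos i)

section Stitch

variable {n m kf : ℕ}

lemma Sstr_get_eq (L I : ℕ) {c c' : Fin n → Bool} (hcc' : ∀ q : Fin n, ¬ inBlk L I q.val → c q = c' q)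
    (p : ℕ) (hp : ¬ inBlk L I p) : (Sstr n c)[p]? = (Sstr n c')[p]? := by
  unfold Sstr
  rw [List.getElem?_ofFn, List.getElem?_ofFn]
  by_cases h : p < n
  · simp only [h, dif_pos]
    rw [hcc' ⟨p, h⟩ hp]
  · simp [h]

lemma Tstr_get_eq (B L I : ℕ) (hL : 0 < L) (hBL : B*L ≤ n) (hI : I < B)
    {c c' : Fin n → Bool} (hcc' : ∀ q : Fin n, ¬ inBlk L I q.val → c q = c' q)
    (p : ℕ) (hp : ¬ inBlk L (B-1-I) p) :
    (Tstr n B L hL hBL c)[p]? = (Tstr n B L hL hBL c')[p]? := by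
  unfold Tstr
  rw [List.getElem?_ofFn, List.getElem?_ofFn]
  by_cases h : p < n
  · simp only [h, dif_pos]
    have hnb : ¬ inBlk L I (mp B L p) := mp_not_inBlk hL hI hp
    have : c (mpF B L hL hBL ⟨p, h⟩) = c' (mpF B L hL hBL ⟨p, h⟩) :=
      hcc' _ hnb
    rw [this]
  · simp [h]

/-- all four streams have length `n` -/
lemma streamOf_length_n (S T : List (Dn n)) (hS : S.length = n) (hT : T.length = n)
    (i : Fin (2*kf + 2*0)) : (streamOf S T i).length = n := by
  rw [streamOf_eq]
  by_cases h : i.val < kf <;> simp [h, hS, hT]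

/-- `Done` only depends on positions when all streams have length `n`. -/
lemma done_iff (S T S' T' : List (Dn n)) (hS : S.length = n) (hT : T.length = n)
    (hS' : S'.length = n) (hT' : T'.length = n) (pos : Fin (2*kf + 2*0) → ℕ) :
    Done S T pos ↔ Done S' T' pos := by
  unfold MP2S.Done
  constructor <;> intro h i
  · have := h i
    rw [streamOf_length_n S T hS hT] at this
    rw [streamOf_length_n S' T' hS' hT']
    exact this
  · have := h i
    rw [streamOf_length_n S' T' hS' hT'] at this
    rw [streamOf_length_n S T hS hT]
    exact this

variable {c c' : Fin n → Bool}

lemma step_w_u (A : MP2S (Dn n) m kf 0) (B L I : ℕ)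
    (hL : 0 < L) (hBL : B*L ≤ n) (hI : I < B)
    (hcc' : ∀ q : Fin n, ¬ inBlk L I q.val → c q = c' q)
    (γ : A.Q × (Fin (2*kf + 2*0) → ℕ)) (hA : ¬ modeAP kf L I γ.2) :
    A.step (Sstr n c') (Tstr n B L hL hBL c) γ = A.step (Sstr n c) (Tstr n B L hL hBL c) γ := by
  apply step_congr
  · intro i
    rw [streamOf_length_n _ _ (length_Sstr n c') (length_Tstr n B L hL hBL c),
        streamOf_length_n _ _ (length_Sstr n c) (length_Tstr n B L hL hBL c)]
  · intro i
    rw [streamOf_eq, streamOf_eq]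
    by_cases h : i.val < kf
    · simp only [h, if_true]
      apply Sstr_get_eq L I (fun q hq => (hcc' q hq).symm)
      intro hcon
      exact hA ⟨i, h, hcon⟩
    · simp [h]

lemma step_w_u' (A : MP2S (Dn n) m kf 0) (B L I : ℕ)
    (hL : 0 < L) (hBL : B*L ≤ n) (hI : I < B)
    (hcc' : ∀ q : Fin n, ¬ inBlk L I q.val → c q = c' q)
    (γ : A.Q × (Fin (2*kf + 2*0) → ℕ)) (hB : ¬ modeBP kf B L I γ.2) :
    A.step (Sstr n c') (Tstr n B L hL hBL c) γ
      = A.step (Sstr n c') (Tstr n B L hL hBL c') γ := by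
  apply step_congr
  · intro i
    rw [streamOf_length_n _ _ (length_Sstr n c') (length_Tstr n B L hL hBL c),
        streamOf_length_n _ _ (length_Sstr n c') (length_Tstr n B L hL hBL c')]
  · intro i
    rw [streamOf_eq, streamOf_eq]
    by_cases h : i.val < kf
    · simp [h]
    · simp only [h, if_false]
      apply Tstr_get_eq B L I hL hBL hI hcc'
      intro hcon
      exact hB ⟨i, by omega, hcon⟩

/-- The hybrid-input stitching lemma: if the runs on the two disjoint inputs for `c` and
`c'` never have a first-stream head in block `I` at the same time as a second-stream head
in block `B-1-I`, and the block-`I`-entry configurations of the `c`-run all occur in the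
`c'`-run and the block-`(B-1-I)`-entry configurations of the `c'`-run all occur in the
`c`-run, then the automaton also accepts the mixed input. -/
theorem stitch (A : MP2S (Dn n) m kf 0) (B L I : ℕ)
    (hL : 0 < L) (hBL : B*L ≤ n) (hI : I < B)
    {c c' : Fin n → Bool}
    (hcc' : ∀ q : Fin n, ¬ inBlk L I q.val → c q = c' q)
    (hu : A.Accepts (Sstr n c) (Tstr n B L hL hBL c))
    (hu' : A.Accepts (Sstr n c') (Tstr n B L hL hBL c'))
    (hNTu : ∀ t, ¬ (modeAP kf L I (A.run (Sstr n c) (Tstr n B L hL hBL c) t).2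
        ∧ modeBP kf B L I (A.run (Sstr n c) (Tstr n B L hL hBL c) t).2))
    (hNTu' : ∀ t, ¬ (modeAP kf L I (A.run (Sstr n c') (Tstr n B L hL hBL c') t).2
        ∧ modeBP kf B L I (A.run (Sstr n c') (Tstr n B L hL hBL c') t).2))
    (X1 : ∀ t, ¬ modeAP kf L I (A.run (Sstr n c) (Tstr n B L hL hBL c) t).2 →
        modeAP kf L I (A.run (Sstr n c) (Tstr n B L hL hBL c) (t+1)).2 →
        ∃ s, A.run (Sstr n c') (Tstr n B L hL hBL c') s
          = A.run (Sstr n c) (Tstr n B L hL hBL c) (t+1))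
    (X2 : ∀ t, ¬ modeBP kf B L I (A.run (Sstr n c') (Tstr n B L hL hBL c') t).2 →
        modeBP kf B L I (A.run (Sstr n c') (Tstr n B L hL hBL c') (t+1)).2 →
        ∃ s, A.run (Sstr n c) (Tstr n B L hL hBL c) s
          = A.run (Sstr n c') (Tstr n B L hL hBL c') (t+1)) :
    A.Accepts (Sstr n c') (Tstr n B L hL hBL c) := by
  set Su := Sstr n c with hSu
  set Tu := Tstr n B L hL hBL c with hTu
  set Su' := Sstr n c' with hSu'
  set Tu' := Tstr n B L hL hBL c' with hTu'
  have hlSu : Su.length = n := length_Sstr n c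
  have hlTu : Tu.length = n := length_Tstr n B L hL hBL c
  have hlSu' : Su'.length = n := length_Sstr n c'
  have hlTu' : Tu'.length = n := length_Tstr n B L hL hBL c'
  -- the invariant
  have Inv : ∀ t,
      (∃ s, A.run Su' Tu t = A.run Su Tu s ∧ ¬ modeAP kf L I (A.run Su Tu s).2)
      ∨ (∃ s, A.run Su' Tu t = A.run Su' Tu' s ∧ ¬ modeBP kf B L I (A.run Su' Tu' s).2) := by
    intro t
    induction t with
    | zero =>
      by_cases h0 : modeAP kf L I (A.run Su Tu 0).2
      · right
        refine ⟨0, rfl, ?_⟩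
        have := hNTu 0
        intro hB0
        exact this ⟨h0, hB0⟩
      · exact Or.inl ⟨0, rfl, h0⟩
    | succ t ih =>
      rcases ih with ⟨s, heq, hA⟩ | ⟨s, heq, hB⟩
      · have hstep : A.run Su' Tu (t+1) = A.run Su Tu (s+1) := by
          rw [run_succ, heq, run_succ]
          exact step_w_u A B L I hL hBL hI hcc' _ hA
        by_cases hA' : modeAP kf L I (A.run Su Tu (s+1)).2
        · obtain ⟨s', hs'⟩ := X1 s hA hA'
          right
          refine ⟨s', by rw [hstep, hs'], ?_⟩
          rw [hs']
          intro hB'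
          exact hNTu (s+1) ⟨hA', hB'⟩
        · exact Or.inl ⟨s+1, hstep, hA'⟩
      · have hstep : A.run Su' Tu (t+1) = A.run Su' Tu' (s+1) := by
          rw [run_succ, heq, run_succ]
          exact step_w_u' A B L I hL hBL hI hcc' _ hB
        by_cases hB' : modeBP kf B L I (A.run Su' Tu' (s+1)).2
        · obtain ⟨s', hs'⟩ := X2 s hB hB'
          left
          refine ⟨s', by rw [hstep, hs'], ?_⟩
          rw [hs']
          intro hA'
          exact hNTu' (s+1) ⟨hA', hB'⟩
        · exact Or.inr ⟨s+1, hstep, hB'⟩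
  -- positions of the hybrid run eventually stabilize
  have hgmono : ∀ {t t'}, t ≤ t' → ∀ i, (A.run Su' Tu t).2 i ≤ (A.run Su' Tu t').2 i :=
    fun h i => pos_mono A Su' Tu h i
  set g : ℕ → ℕ := fun t => ∑ i, (A.run Su' Tu t).2 i with hg
  have hgm : ∀ {t t'}, t ≤ t' → g t ≤ g t' := by
    intro t t' h
    exact Finset.sum_le_sum (fun i _ => hgmono h i)
  have hbdd : BddAbove (Set.range g) := by
    refine ⟨∑ i : Fin (2*kf + 2*0), (streamOf Su' Tu i).length, ?_⟩
    rintro x ⟨t, rfl⟩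
    exact Finset.sum_le_sum (fun i _ => pos_le_len A Su' Tu t i)
  have hne : (Set.range g).Nonempty := ⟨g 0, 0, rfl⟩
  obtain ⟨t₀, ht₀⟩ := Nat.sSup_mem hne hbdd
  have hfrozen : ∀ t, t₀ ≤ t → ∀ i, (A.run Su' Tu t).2 i = (A.run Su' Tu t₀).2 i := by
    intro t ht
    have h1 : g t ≤ g t₀ := by
      rw [ht₀]
      exact le_csSup hbdd ⟨t, rfl⟩
    have h2 : g t₀ ≤ g t := hgm ht
    have hsum : g t₀ = g t := le_antisymm h2 h1
    have := (Finset.sum_eq_sum_iff_of_le (fun i _ => hgmono ht i)).mp hsum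
    intro i
    exact (this i (Finset.mem_univ i)).symm
  -- conclude acceptance
  rcases Inv t₀ with ⟨s, heq, hA⟩ | ⟨s, heq, hB⟩
  · -- hybrid follows the run on (Su, Tu) forever
    have follow : ∀ j, A.run Su' Tu (t₀+j) = A.run Su Tu (s+j)
        ∧ ¬ modeAP kf L I (A.run Su Tu (s+j)).2 := by
      intro j
      induction j with
      | zero => exact ⟨heq, hA⟩
      | succ j ihj =>
        obtain ⟨hj1, hj2⟩ := ihj
        have hstep : A.run Su' Tu (t₀+(j+1)) = A.run Su Tu (s+(j+1)) := by
          rw [← Nat.add_assoc, ← Nat.add_assoc, run_succ, hj1, run_succ]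
          exact step_w_u A B L I hL hBL hI hcc' _ hj2
        refine ⟨hstep, ?_⟩
        have hpos : (A.run Su Tu (s+(j+1))).2 = (A.run Su Tu s).2 := by
          rw [← hstep]
          funext i
          rw [hfrozen (t₀+(j+1)) (by omega) i]
          exact congrArg (fun z => z.2 i) heq
        intro hcon
        obtain ⟨i, hik, hblk⟩ := hcon
        rw [hpos] at hblk
        exact hA ⟨i, hik, hblk⟩
    obtain ⟨τ, hτd, hτa⟩ := hu
    have heqc : ∃ tw, A.run Su' Tu tw = A.run Su Tu τ := by
      rcases le_or_gt s τ with hsτ | hsτ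
      · refine ⟨t₀ + (τ - s), ?_⟩
        have h0 := (follow (τ - s)).1
        have heq2 : s + (τ - s) = τ := by omega
        rw [heq2] at h0
        exact h0
      · refine ⟨t₀, ?_⟩
        have h0 := (follow 0).1
        simp only [Nat.add_zero] at h0
        rw [h0]
        exact done_frozen A Su Tu hτd (by omega)
    obtain ⟨tw, htw⟩ := heqc
    refine ⟨tw, ?_, ?_⟩
    · have hp2 : (A.run Su' Tu tw).2 = (A.run Su Tu τ).2 := congrArg Prod.snd htw
      rw [hp2]
      exact (done_iff Su Tu Su' Tu hlSu hlTu hlSu' hlTu _).mp hτd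
    · have hp1 : (A.run Su' Tu tw).1 = (A.run Su Tu τ).1 := congrArg Prod.fst htw
      rw [hp1]
      exact hτa
  · -- hybrid follows the run on (Su', Tu') forever
    have follow : ∀ j, A.run Su' Tu (t₀+j) = A.run Su' Tu' (s+j)
        ∧ ¬ modeBP kf B L I (A.run Su' Tu' (s+j)).2 := by
      intro j
      induction j with
      | zero => exact ⟨heq, hB⟩
      | succ j ihj =>
        obtain ⟨hj1, hj2⟩ := ihj
        have hstep : A.run Su' Tu (t₀+(j+1)) = A.run Su' Tu' (s+(j+1)) := by
          rw [← Nat.add_assoc, ← Nat.add_assoc, run_succ, hj1, run_succ]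
          exact step_w_u' A B L I hL hBL hI hcc' _ hj2
        refine ⟨hstep, ?_⟩
        have hpos : (A.run Su' Tu' (s+(j+1))).2 = (A.run Su' Tu' s).2 := by
          rw [← hstep]
          funext i
          rw [hfrozen (t₀+(j+1)) (by omega) i]
          exact congrArg (fun z => z.2 i) heq
        intro hcon
        obtain ⟨i, hik, hblk⟩ := hcon
        rw [hpos] at hblk
        exact hB ⟨i, hik, hblk⟩
    obtain ⟨τ, hτd, hτa⟩ := hu'
    have heqc : ∃ tw, A.run Su' Tu tw = A.run Su' Tu' τ := by
      rcases le_or_gt s τ with hsτ | hsτ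
      · refine ⟨t₀ + (τ - s), ?_⟩
        have h0 := (follow (τ - s)).1
        have heq2 : s + (τ - s) = τ := by omega
        rw [heq2] at h0
        exact h0
      · refine ⟨t₀, ?_⟩
        have h0 := (follow 0).1
        simp only [Nat.add_zero] at h0
        rw [h0]
        exact done_frozen A Su' Tu' hτd (by omega)
    obtain ⟨tw, htw⟩ := heqc
    refine ⟨tw, ?_, ?_⟩
    · have hp2 : (A.run Su' Tu tw).2 = (A.run Su' Tu' τ).2 := congrArg Prod.snd htw
      rw [hp2]
      exact (done_iff Su' Tu' Su' Tu hlSu' hlTu' hlSu' hlTu _).mp hτd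
    · have hp1 : (A.run Su' Tu tw).1 = (A.run Su' Tu' τ).1 := congrArg Prod.fst htw
      rw [hp1]
      exact hτa

end Stitch

/-! ### Counting: untraversed anti-diagonal block pairs -/

section Counting

variable {n m kf : ℕ}

lemma untrav_time_cmp (A : MP2S (Dn n) m kf 0) (S T : List (Dn n)) (B L : ℕ)
    {I₁ I₂ t₁ t₂ : ℕ} (hI₁ : I₁ < B) (hI₂ : I₂ < B) (ht : t₁ ≤ t₂)
    {i j : Fin (2*kf + 2*0)}
    (h1 : inBlk L I₁ ((A.run S T t₁).2 i)) (h2 : inBlk L (B-1-I₁) ((A.run S T t₁).2 j))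
    (h3 : inBlk L I₂ ((A.run S T t₂).2 i)) (h4 : inBlk L (B-1-I₂) ((A.run S T t₂).2 j)) :
    I₁ = I₂ := by
  have hpi := pos_mono A S T ht i
  have hpj := pos_mono A S T ht j
  by_contra hne
  rcases Nat.lt_or_ge I₁ I₂ with hlt | hge
  · -- second-stream head must go backwards
    have hK : B-1-I₂ + 1 ≤ B-1-I₁ := by omega
    have hmul : (B-1-I₂+1) * L ≤ (B-1-I₁) * L := Nat.mul_le_mul_right _ hK
    have hexp : (B-1-I₂+1) * L = (B-1-I₂)*L + L := by ring
    obtain ⟨a1, a2⟩ := h2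
    obtain ⟨a3, a4⟩ := h4
    omega
  · have hlt : I₂ < I₁ := by omega
    have hmul : (I₂+1) * L ≤ I₁ * L := Nat.mul_le_mul_right _ (by omega)
    have hexp : (I₂+1) * L = I₂*L + L := by ring
    obtain ⟨a1, a2⟩ := h1
    obtain ⟨a3, a4⟩ := h3
    omega

lemma exists_untrav (A : MP2S (Dn n) m kf 0) (S T : List (Dn n)) (B L : ℕ)
    (hkB : kf*kf < B) :
    ∃ I, I < B ∧ ∀ t, ¬ (modeAP kf L I (A.run S T t).2 ∧ modeBP kf B L I (A.run S T t).2) := by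
  by_contra hcon
  push_neg at hcon
  have hch : ∀ I : Fin B, ∃ (t : ℕ) (i j : Fin (2*kf+2*0)),
      i.val < kf ∧ kf ≤ j.val ∧ inBlk L I.val ((A.run S T t).2 i)
        ∧ inBlk L (B-1-I.val) ((A.run S T t).2 j) := by
    intro I
    obtain ⟨t, hAB⟩ := hcon I.val I.2
    obtain ⟨⟨i, hi, hbi⟩, ⟨j, hj, hbj⟩⟩ := hAB
    exact ⟨t, i, j, hi, hj, hbi, hbj⟩
  choose tf fi fj hfi hfj hbi hbj using hch
  have hinj : Function.Injective
      (fun I : Fin B => ((⟨(fi I).val, hfi I⟩ : Fin kf),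
        (⟨(fj I).val - kf, by have := head_lt2kf (fj I); omega⟩ : Fin kf))) := by
    intro I₁ I₂ hf
    have e1 : (fi I₁).val = (fi I₂).val := congrArg (fun z => z.1.val) hf
    have e2 : (fj I₁).val - kf = (fj I₂).val - kf := congrArg (fun z => z.2.val) hf
    have e2' : (fj I₁).val = (fj I₂).val := by
      have := hfj I₁; have := hfj I₂; omega
    have ei : fi I₁ = fi I₂ := Fin.ext e1
    have ej : fj I₁ = fj I₂ := Fin.ext e2'
    apply Fin.ext
    rcases le_total (tf I₁) (tf I₂) with ht | ht
    · refine untrav_time_cmp A S T B L I₁.2 I₂.2 ht (hbi I₁) (hbj I₁) ?_ ?_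
      · rw [ei]; exact hbi I₂
      · rw [ej]; exact hbj I₂
    · refine (untrav_time_cmp A S T B L I₂.2 I₁.2 ht (hbi I₂) (hbj I₂) ?_ ?_).symm
      · rw [← ei]; exact hbi I₁
      · rw [← ej]; exact hbj I₁
  have hcards := Fintype.card_le_of_injective _ hinj
  simp only [Fintype.card_fin, Fintype.card_prod] at hcards
  omega

/-! ### Entry times and their encodings -/

variable (A : MP2S (Dn n) m kf 0)

/-- positions never exceed `n` when both streams have length `n` -/
lemma pos_le_n (S T : List (Dn n)) (hS : S.length = n) (hT : T.length = n) (t : ℕ)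
    (i : Fin (2*kf + 2*0)) : (A.run S T t).2 i ≤ n := by
  have := pos_le_len A S T t i
  rwa [streamOf_length_n S T hS hT] at this

open Classical in
/-- the first time the computation is done (or `0` if it never is) -/
noncomputable def stopT (S T : List (Dn n)) : ℕ :=
  if h : ∃ t, Done S T (A.run S T t).2 then Nat.find h else 0

open Classical in
/-- times at which some first-stream head first enters block `I` -/
noncomputable def entA (S T : List (Dn n)) (L I : ℕ) : Finset ℕ :=
  (Finset.range (stopT A S T)).filter
    (fun t => modeAP kf L I (A.run S T t).2 ∧ (t = 0 ∨ ¬ modeAP kf L I (A.run S T (t-1)).2))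

open Classical in
/-- times at which some second-stream head first enters block `B-1-I` -/
noncomputable def entB (S T : List (Dn n)) (B L I : ℕ) : Finset ℕ :=
  (Finset.range (stopT A S T)).filter
    (fun t => modeBP kf B L I (A.run S T t).2 ∧ (t = 0 ∨ ¬ modeBP kf B L I (A.run S T (t-1)).2))

lemma entA_mono_absurd (S T : List (Dn n)) (L I : ℕ) {t₁ t₂ : ℕ}
    (h2 : t₂ ∈ entA A S T L I) (hlt : t₁ < t₂) {i : Fin (2*kf+2*0)} (hik : i.val < kf)
    (hb1 : inBlk L I ((A.run S T t₁).2 i))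
    (hb2 : inBlk L I ((A.run S T t₂).2 i)) : False := by
  classical
  rw [entA, Finset.mem_filter] at h2
  obtain ⟨-, -, hprev⟩ := h2
  rcases hprev with h0 | hnm
  · omega
  · exact hnm ⟨i, hik, inBlk_sandwich hb1 hb2
      (pos_mono A S T (by omega) i) (pos_mono A S T (by omega) i)⟩

lemma entB_mono_absurd (S T : List (Dn n)) (B L I : ℕ) {t₁ t₂ : ℕ}
    (h2 : t₂ ∈ entB A S T B L I) (hlt : t₁ < t₂) {i : Fin (2*kf+2*0)} (hik : kf ≤ i.val)
    (hb1 : inBlk L (B-1-I) ((A.run S T t₁).2 i))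
    (hb2 : inBlk L (B-1-I) ((A.run S T t₂).2 i)) : False := by
  classical
  rw [entB, Finset.mem_filter] at h2
  obtain ⟨-, -, hprev⟩ := h2
  rcases hprev with h0 | hnm
  · omega
  · exact hnm ⟨i, hik, inBlk_sandwich hb1 hb2
      (pos_mono A S T (by omega) i) (pos_mono A S T (by omega) i)⟩

lemma card_entA (S T : List (Dn n)) (L I : ℕ) : (entA A S T L I).card ≤ kf := by
  classical
  rcases Nat.eq_zero_or_pos kf with hkf | hkf
  · have : entA A S T L I = ∅ := by
      apply Finset.eq_empty_of_forall_notMem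
      intro t ht
      rw [entA, Finset.mem_filter] at ht
      obtain ⟨-, ⟨i, hik, -⟩, -⟩ := ht
      omega
    rw [this]
    simp
  · have hwit : ∀ t ∈ entA A S T L I, ∃ i : Fin (2*kf+2*0), i.val < kf
        ∧ inBlk L I ((A.run S T t).2 i) := by
      intro t ht
      rw [entA, Finset.mem_filter] at ht
      obtain ⟨-, ⟨i, hik, hblk⟩, -⟩ := ht
      exact ⟨i, hik, hblk⟩
    choose wit hwk hwb using hwit
    have hle : (entA A S T L I).card ≤ (Finset.univ : Finset (Fin kf)).card := by
      refine Finset.card_le_card_of_injOn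
        (fun t => if h : t ∈ entA A S T L I then ⟨(wit t h).val, hwk t h⟩ else ⟨0, hkf⟩)
        (fun a _ => Finset.mem_univ _) ?_
      intro t₁ ht₁ t₂ ht₂ hft
      simp only [Finset.mem_coe] at ht₁ ht₂
      simp only [dif_pos ht₁, dif_pos ht₂] at hft
      have hv : (wit t₁ ht₁).val = (wit t₂ ht₂).val := by
        have := congrArg Fin.val hft
        simpa using this
      have hw : wit t₁ ht₁ = wit t₂ ht₂ := Fin.ext hv
      rcases Nat.lt_trichotomy t₁ t₂ with hlt | heq | hgt
      · exact absurd (entA_mono_absurd A S T L I ht₂ hlt (hwk t₁ ht₁)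
          (hwb t₁ ht₁) (hw ▸ hwb t₂ ht₂)) (fun h => h)
      · exact heq
      · exact absurd (entA_mono_absurd A S T L I ht₁ hgt (hwk t₂ ht₂)
          (hwb t₂ ht₂) (hw ▸ hwb t₁ ht₁)) (fun h => h)
    simpa using hle

lemma card_entB (S T : List (Dn n)) (B L I : ℕ) : (entB A S T B L I).card ≤ kf := by
  classical
  rcases Nat.eq_zero_or_pos kf with hkf | hkf
  · have : entB A S T B L I = ∅ := by
      apply Finset.eq_empty_of_forall_notMem
      intro t ht
      rw [entB, Finset.mem_filter] at ht
      obtain ⟨-, ⟨i, hik, -⟩, -⟩ := ht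
      have := head_lt2kf i
      omega
    rw [this]
    simp
  · have hwit : ∀ t ∈ entB A S T B L I, ∃ i : Fin (2*kf+2*0), kf ≤ i.val
        ∧ inBlk L (B-1-I) ((A.run S T t).2 i) := by
      intro t ht
      rw [entB, Finset.mem_filter] at ht
      obtain ⟨-, ⟨i, hik, hblk⟩, -⟩ := ht
      exact ⟨i, hik, hblk⟩
    choose wit hwk hwb using hwit
    have hle : (entB A S T B L I).card ≤ (Finset.univ : Finset (Fin kf)).card := by
      refine Finset.card_le_card_of_injOn
        (fun t => if h : t ∈ entB A S T B L I then
          ⟨(wit t h).val - kf, by have := head_lt2kf (wit t h); omega⟩ else ⟨0, hkf⟩)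
        (fun a _ => Finset.mem_univ _) ?_
      intro t₁ ht₁ t₂ ht₂ hft
      simp only [Finset.mem_coe] at ht₁ ht₂
      simp only [dif_pos ht₁, dif_pos ht₂] at hft
      have hv : (wit t₁ ht₁).val - kf = (wit t₂ ht₂).val - kf := by
        have := congrArg Fin.val hft
        simpa using this
      have hw : wit t₁ ht₁ = wit t₂ ht₂ := by
        apply Fin.ext
        have := hwk t₁ ht₁
        have := hwk t₂ ht₂
        omega
      rcases Nat.lt_trichotomy t₁ t₂ with hlt | heq | hgt
      · exact absurd (entB_mono_absurd A S T B L I ht₂ hlt (hwk t₁ ht₁)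
          (hwb t₁ ht₁) (hw ▸ hwb t₂ ht₂)) (fun h => h)
      · exact heq
      · exact absurd (entB_mono_absurd A S T B L I ht₁ hgt (hwk t₂ ht₂)
          (hwb t₂ ht₂) (hw ▸ hwb t₁ ht₁)) (fun h => h)
    simpa using hle

/-! ### Configuration encodings and crossing data -/

/-- bounded encoding of a configuration -/
def enc (γ : A.Q × (Fin (2*kf + 2*0) → ℕ)) : A.Q × (Fin (2*kf + 2*0) → Fin (n+1)) :=
  (γ.1, fun i => ⟨min (γ.2 i) n, by omega⟩)

lemma enc_inj {γ γ' : A.Q × (Fin (2*kf + 2*0) → ℕ)}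
    (hb : ∀ i, γ.2 i ≤ n) (hb' : ∀ i, γ'.2 i ≤ n) (h : enc A γ = enc A γ') : γ = γ' := by
  obtain ⟨q, p⟩ := γ
  obtain ⟨q', p'⟩ := γ'
  unfold enc at h
  simp only [Prod.mk.injEq] at h ⊢
  obtain ⟨h1, h2⟩ := h
  refine ⟨h1, funext fun i => ?_⟩
  have := congrArg (fun f => (f i).val) h2
  simp only at this
  have hbi := hb i
  have hbi' := hb' i
  simp only [Nat.min_eq_left hbi, Nat.min_eq_left hbi'] at this
  exact this

open Classical in
/-- encoded entry configurations for the first stream, as a tuple -/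
noncomputable def psiA (S T : List (Dn n)) (L I : ℕ) : Fin kf → Option (A.Q × (Fin (2*kf + 2*0) → Fin (n+1))) :=
  fun i => (((entA A S T L I).sort (· ≤ ·))[i.val]?).map (fun t => enc A (A.run S T t))

open Classical in
/-- encoded entry configurations for the second stream, as a tuple -/
noncomputable def psiB (S T : List (Dn n)) (B L I : ℕ) : Fin kf → Option (A.Q × (Fin (2*kf + 2*0) → Fin (n+1))) :=
  fun i => (((entB A S T B L I).sort (· ≤ ·))[i.val]?).map (fun t => enc A (A.run S T t))

/-- if the `psiA`-data of two runs agree, every entry configuration of the first run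
occurs in the second run -/
lemma psiA_lookup (S T S' T' : List (Dn n)) (L I : ℕ)
    (hS : S.length = n) (hT : T.length = n) (hS' : S'.length = n) (hT' : T'.length = n)
    (hpsi : psiA A S T L I = psiA A S' T' L I)
    {t : ℕ} (ht : t ∈ entA A S T L I) : ∃ s, A.run S' T' s = A.run S T t := by
  classical
  have hmem : t ∈ (entA A S T L I).sort (· ≤ ·) := (Finset.mem_sort _).mpr ht
  rw [List.mem_iff_getElem] at hmem
  obtain ⟨i, hi, hgt⟩ := hmem
  have hlen : ((entA A S T L I).sort (· ≤ ·)).length ≤ kf := by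
    rw [Finset.length_sort]
    exact card_entA A S T L I
  have hik : i < kf := by omega
  have h1 : psiA A S T L I ⟨i, hik⟩ = some (enc A (A.run S T t)) := by
    unfold psiA
    rw [List.getElem?_eq_getElem hi, hgt]
    rfl
  have h2 := congrFun hpsi ⟨i, hik⟩
  rw [h1] at h2
  unfold psiA at h2
  obtain ⟨s, hs1, hs2⟩ := Option.map_eq_some_iff.mp h2.symm
  refine ⟨s, ?_⟩
  exact enc_inj A (pos_le_n A S' T' hS' hT' s) (pos_le_n A S T hS hT t) hs2

lemma psiB_lookup (S T S' T' : List (Dn n)) (B L I : ℕ)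
    (hS : S.length = n) (hT : T.length = n) (hS' : S'.length = n) (hT' : T'.length = n)
    (hpsi : psiB A S T B L I = psiB A S' T' B L I)
    {t : ℕ} (ht : t ∈ entB A S T B L I) : ∃ s, A.run S' T' s = A.run S T t := by
  classical
  have hmem : t ∈ (entB A S T B L I).sort (· ≤ ·) := (Finset.mem_sort _).mpr ht
  rw [List.mem_iff_getElem] at hmem
  obtain ⟨i, hi, hgt⟩ := hmem
  have hlen : ((entB A S T B L I).sort (· ≤ ·)).length ≤ kf := by
    rw [Finset.length_sort]
    exact card_entB A S T B L I
  have hik : i < kf := by omega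
  have h1 : psiB A S T B L I ⟨i, hik⟩ = some (enc A (A.run S T t)) := by
    unfold psiB
    rw [List.getElem?_eq_getElem hi, hgt]
    rfl
  have h2 := congrFun hpsi ⟨i, hik⟩
  rw [h1] at h2
  unfold psiB at h2
  obtain ⟨s, hs1, hs2⟩ := Option.map_eq_some_iff.mp h2.symm
  refine ⟨s, ?_⟩
  exact enc_inj A (pos_le_n A S' T' hS' hT' s) (pos_le_n A S T hS hT t) hs2

/-- a `Done` configuration has no head inside a block -/
lemma done_no_modeA (S T : List (Dn n)) (hS : S.length = n) (hT : T.length = n)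
    (B L I : ℕ) (hBL : B*L ≤ n) (hI : I < B) {pos : Fin (2*kf + 2*0) → ℕ}
    (hd : Done S T pos) : ¬ modeAP kf L I pos := by
  rintro ⟨i, hik, hb1, hb2⟩
  have := hd i
  rw [streamOf_length_n S T hS hT] at this
  have hIL : I*L + L ≤ B*L := by
    have h5 : (I+1)*L ≤ B*L := Nat.mul_le_mul_right _ (by omega)
    have h6 : (I+1)*L = I*L + L := by ring
    omega
  omega

lemma done_no_modeB (S T : List (Dn n)) (hS : S.length = n) (hT : T.length = n)
    (B L I : ℕ) (hBL : B*L ≤ n) (hI : I < B) {pos : Fin (2*kf + 2*0) → ℕ}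
    (hd : Done S T pos) : ¬ modeBP kf B L I pos := by
  rintro ⟨i, hik, hb1, hb2⟩
  have := hd i
  rw [streamOf_length_n S T hS hT] at this
  have hIL : (B-1-I)*L + L ≤ B*L := by
    have h5 : (B-1-I+1)*L ≤ B*L := Nat.mul_le_mul_right _ (by omega)
    have h6 : (B-1-I+1)*L = (B-1-I)*L + L := by ring
    omega
  omega

/-- entries into mode A are recorded in `entA` -/
lemma entry_memA (S T : List (Dn n)) (hS : S.length = n) (hT : T.length = n)
    (B L I : ℕ) (hBL : B*L ≤ n) (hI : I < B)
    (hacc : A.Accepts S T) {t : ℕ}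
    (h1 : ¬ modeAP kf L I (A.run S T t).2) (h2 : modeAP kf L I (A.run S T (t+1)).2) :
    (t+1) ∈ entA A S T L I := by
  classical
  have hex : ∃ τ, Done S T (A.run S T τ).2 := by
    obtain ⟨τ, hτ, -⟩ := hacc
    exact ⟨τ, hτ⟩
  have hstop : stopT A S T = Nat.find hex := by
    unfold stopT
    rw [dif_pos hex]
  have hlt : t+1 < stopT A S T := by
    by_contra hge
    have hfd : Done S T (A.run S T (Nat.find hex)).2 := Nat.find_spec hex
    have : A.run S T (t+1) = A.run S T (Nat.find hex) :=
      done_frozen A S T hfd (by omega)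
    rw [this] at h2
    exact done_no_modeA S T hS hT B L I hBL hI hfd h2
  rw [entA, Finset.mem_filter]
  refine ⟨Finset.mem_range.mpr hlt, h2, Or.inr ?_⟩
  simpa using h1

lemma entry_memB (S T : List (Dn n)) (hS : S.length = n) (hT : T.length = n)
    (B L I : ℕ) (hBL : B*L ≤ n) (hI : I < B)
    (hacc : A.Accepts S T) {t : ℕ}
    (h1 : ¬ modeBP kf B L I (A.run S T t).2) (h2 : modeBP kf B L I (A.run S T (t+1)).2) :
    (t+1) ∈ entB A S T B L I := by
  classical
  have hex : ∃ τ, Done S T (A.run S T τ).2 := by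
    obtain ⟨τ, hτ, -⟩ := hacc
    exact ⟨τ, hτ⟩
  have hstop : stopT A S T = Nat.find hex := by
    unfold stopT
    rw [dif_pos hex]
  have hlt : t+1 < stopT A S T := by
    by_contra hge
    have hfd : Done S T (A.run S T (Nat.find hex)).2 := Nat.find_spec hex
    have : A.run S T (t+1) = A.run S T (Nat.find hex) :=
      done_frozen A S T hfd (by omega)
    rw [this] at h2
    exact done_no_modeB S T hS hT B L I hBL hI hfd h2
  rw [entB, Finset.mem_filter]
  refine ⟨Finset.mem_range.mpr hlt, h2, Or.inr ?_⟩
  simpa using h1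

/-! ### Encoding the data outside one block -/

/-- enumeration of the positions outside block `I` -/
def embedOut (L I p : ℕ) : ℕ := if p < I*L then p else p + L

/-- the restriction of `c` to the positions outside block `I` -/
def restOf (L I : ℕ) (c : Fin n → Bool) : Fin (n-L) → Bool :=
  fun p => if h : embedOut L I p.val < n then c ⟨embedOut L I p.val, h⟩ else false

lemma restOf_agree {B L I : ℕ} (hBL : B*L ≤ n) (hI : I < B) {c c' : Fin n → Bool}
    (h : restOf L I c = restOf L I c') (q : Fin n) (hq : ¬ inBlk L I q.val) : c q = c' q := by
  have hIL : I*L + L ≤ n := by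
    have h5 : (I+1)*L ≤ B*L := Nat.mul_le_mul_right _ (by omega)
    have h6 : (I+1)*L = I*L + L := by ring
    omega
  unfold inBlk at hq
  push_neg at hq
  have hqn := q.2
  rcases Nat.lt_or_ge q.val (I*L) with h1 | h1
  · have hp : q.val < n - L := by omega
    have hthis := congrFun h ⟨q.val, hp⟩
    unfold restOf at hthis
    have hemb : embedOut L I q.val = q.val := by
      unfold embedOut
      simp only [h1, if_true]
    have hlt : embedOut L I ((⟨q.val, hp⟩ : Fin (n-L)) : ℕ) < n := by
      simpa [hemb] using hqn
    rw [dif_pos hlt, dif_pos hlt] at hthis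
    have hfin : (⟨embedOut L I ((⟨q.val, hp⟩ : Fin (n-L)) : ℕ), hlt⟩ : Fin n) = q := by
      apply Fin.ext
      simpa using hemb
    rwa [hfin] at hthis
  · have h2 : I*L + L ≤ q.val := hq h1
    have hp : q.val - L < n - L := by omega
    have hthis := congrFun h ⟨q.val - L, hp⟩
    unfold restOf at hthis
    have hemb : embedOut L I (q.val - L) = q.val := by
      unfold embedOut
      have : ¬ (q.val - L < I*L) := by omega
      simp only [this, if_false]
      omega
    have hlt : embedOut L I ((⟨q.val - L, hp⟩ : Fin (n-L)) : ℕ) < n := by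
      simpa [hemb] using hqn
    rw [dif_pos hlt, dif_pos hlt] at hthis
    have hfin : (⟨embedOut L I ((⟨q.val - L, hp⟩ : Fin (n-L)) : ℕ), hlt⟩ : Fin n) = q := by
      apply Fin.ext
      simpa using hemb
    rwa [hfin] at hthis

/-! ### The main combinatorial theorem for a single `n` -/

theorem no_solver {n m kf : ℕ} (B L : ℕ) (hL : 0 < L) (hBL : B*L ≤ n) (hkB : kf*kf < B)
    (A : MP2S (Dn n) m kf 0)
    (hcount : B * (2^(n-L) * ((m*(n+1)^(2*kf)+1)^kf * (m*(n+1)^(2*kf)+1)^kf)) < 2^n) :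
    ¬ SolvesDisj n A := by
  classical
  intro hsolve
  have hacc : ∀ c : Fin n → Bool, A.Accepts (Sstr n c) (Tstr n B L hL hBL c) := fun c =>
    (hsolve _ _ (length_Sstr n c) (length_Tstr n B L hL hBL c)).mpr
      (disjoint_STstr n B L hL hBL c)
  have huntrav := fun c : Fin n → Bool =>
    exists_untrav A (Sstr n c) (Tstr n B L hL hBL c) B L hkB
  set I0 : (Fin n → Bool) → ℕ := fun c => (huntrav c).choose with hI0
  have hI0B : ∀ c, I0 c < B := fun c => (huntrav c).choose_spec.1
  have hNT : ∀ c t, ¬ (modeAP kf L (I0 c) (A.run (Sstr n c) (Tstr n B L hL hBL c) t).2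
      ∧ modeBP kf B L (I0 c) (A.run (Sstr n c) (Tstr n B L hL hBL c) t).2) :=
    fun c => (huntrav c).choose_spec.2
  -- pigeonhole
  set Φ : (Fin n → Bool) → Fin B × (Fin (n-L) → Bool)
      × (Fin kf → Option (A.Q × (Fin (2*kf+2*0) → Fin (n+1))))
      × (Fin kf → Option (A.Q × (Fin (2*kf+2*0) → Fin (n+1)))) :=
    fun c => (⟨I0 c, hI0B c⟩, restOf L (I0 c) c,
      psiA A (Sstr n c) (Tstr n B L hL hBL c) L (I0 c),
      psiB A (Sstr n c) (Tstr n B L hL hBL c) B L (I0 c)) with hΦdef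
  have hcEnc : Fintype.card (A.Q × (Fin (2*kf+2*0) → Fin (n+1))) = m * (n+1)^(2*kf) := by
    simp [Fintype.card_fun, A.cardQ]
  have hcardlt : Fintype.card (Fin B × (Fin (n-L) → Bool)
      × (Fin kf → Option (A.Q × (Fin (2*kf+2*0) → Fin (n+1))))
      × (Fin kf → Option (A.Q × (Fin (2*kf+2*0) → Fin (n+1)))))
      < Fintype.card (Fin n → Bool) := by
    rw [Fintype.card_prod, Fintype.card_prod, Fintype.card_prod]
    rw [Fintype.card_fun, Fintype.card_fun, Fintype.card_fun]
    rw [Fintype.card_option, hcEnc]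
    simp only [Fintype.card_fin, Fintype.card_bool]
    exact hcount
  obtain ⟨c, c', hne, hΦeq⟩ := Fintype.exists_ne_map_eq_of_card_lt Φ hcardlt
  -- extract the components
  have hIeq : I0 c = I0 c' := by
    have := congrArg (fun z => (Fin.val z.1)) hΦeq
    simpa [hΦdef] using this
  have hrest : restOf L (I0 c) c = restOf L (I0 c) c' := by
    have := congrArg (fun z => z.2.1) hΦeq
    simp only [hΦdef] at this
    rw [← hIeq] at this
    exact this
  have hpsiA : psiA A (Sstr n c) (Tstr n B L hL hBL c) L (I0 c)
      = psiA A (Sstr n c') (Tstr n B L hL hBL c') L (I0 c) := by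
    have := congrArg (fun z => z.2.2.1) hΦeq
    simp only [hΦdef] at this
    rw [← hIeq] at this
    exact this
  have hpsiB : psiB A (Sstr n c) (Tstr n B L hL hBL c) B L (I0 c)
      = psiB A (Sstr n c') (Tstr n B L hL hBL c') B L (I0 c) := by
    have := congrArg (fun z => z.2.2.2) hΦeq
    simp only [hΦdef] at this
    rw [← hIeq] at this
    exact this
  set I := I0 c with hIdef
  have hIB : I < B := hI0B c
  have hcc' : ∀ q : Fin n, ¬ inBlk L I q.val → c q = c' q :=
    fun q hq => restOf_agree hBL hIB hrest q hq
  have hNTc' : ∀ t, ¬ (modeAP kf L I (A.run (Sstr n c') (Tstr n B L hL hBL c') t).2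
      ∧ modeBP kf B L I (A.run (Sstr n c') (Tstr n B L hL hBL c') t).2) := by
    have := hNT c'
    rw [← hIeq] at this
    exact this
  -- the stitching hypotheses
  have X1 : ∀ t, ¬ modeAP kf L I (A.run (Sstr n c) (Tstr n B L hL hBL c) t).2 →
      modeAP kf L I (A.run (Sstr n c) (Tstr n B L hL hBL c) (t+1)).2 →
      ∃ s, A.run (Sstr n c') (Tstr n B L hL hBL c') s
        = A.run (Sstr n c) (Tstr n B L hL hBL c) (t+1) := by
    intro t h1 h2
    have hmem := entry_memA A (Sstr n c) (Tstr n B L hL hBL c)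
      (length_Sstr n c) (length_Tstr n B L hL hBL c) B L I hBL hIB (hacc c) h1 h2
    exact psiA_lookup A _ _ _ _ L I (length_Sstr n c) (length_Tstr n B L hL hBL c)
      (length_Sstr n c') (length_Tstr n B L hL hBL c') hpsiA hmem
  have X2 : ∀ t, ¬ modeBP kf B L I (A.run (Sstr n c') (Tstr n B L hL hBL c') t).2 →
      modeBP kf B L I (A.run (Sstr n c') (Tstr n B L hL hBL c') (t+1)).2 →
      ∃ s, A.run (Sstr n c) (Tstr n B L hL hBL c) s
        = A.run (Sstr n c') (Tstr n B L hL hBL c') (t+1) := by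
    intro t h1 h2
    have hmem := entry_memB A (Sstr n c') (Tstr n B L hL hBL c')
      (length_Sstr n c') (length_Tstr n B L hL hBL c') B L I hBL hIB (hacc c') h1 h2
    exact psiB_lookup A _ _ _ _ B L I (length_Sstr n c') (length_Tstr n B L hL hBL c')
      (length_Sstr n c) (length_Tstr n B L hL hBL c) hpsiB.symm hmem
  -- the automaton accepts the intersecting hybrid input
  have haccw : A.Accepts (Sstr n c') (Tstr n B L hL hBL c) :=
    stitch A B L I hL hBL hIB hcc' (hacc c) (hacc c') (hNT c) hNTc' X1 X2
  -- but the hybrid input is intersecting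
  obtain ⟨q, hqne⟩ := Function.ne_iff.mp hne
  have hqblk : inBlk L I q.val := by
    by_contra hq
    exact hqne (hcc' q hq)
  have hmemS : ((q, c' q) : Dn n) ∈ Sstr n c' := by
    unfold Sstr
    rw [List.mem_ofFn]
    exact ⟨q, rfl⟩
  have hmemT : ((q, c' q) : Dn n) ∈ Tstr n B L hL hBL c := by
    have hbool : c' q = ! c q := by
      revert hqne
      cases c q <;> cases c' q <;> simp
    rw [hbool]
    exact mem_Tstr q
  have := (hsolve _ _ (length_Sstr n c') (length_Tstr n B L hL hBL c)).mp haccw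
  exact this _ hmemS hmemT

end Counting

/-! ### Asymptotic arithmetic -/

open Filter Real in
lemma real_log_bound : ∀ᶠ x : ℝ in atTop, Real.logb 2 (x+1) + 1 ≤ x^((1:ℝ)/15)/150 := by
  have h1 := (isLittleO_log_rpow_atTop (by norm_num : (0:ℝ) < 1/15)).def
    (by norm_num : (0:ℝ) < 1/600)
  have h2 := (tendsto_rpow_atTop (by norm_num : (0:ℝ) < 1/15)).eventually_ge_atTop (600:ℝ)
  have h3 : ∀ᶠ x : ℝ in atTop, (1:ℝ) ≤ x := eventually_ge_atTop 1
  filter_upwards [h1, h2, h3] with x hx1 hx2 hx3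
  have hx0 : (0:ℝ) < x := by linarith
  have hrpos : (0:ℝ) ≤ x^((1:ℝ)/15) := rpow_nonneg (le_of_lt hx0) _
  have hlogx : Real.log x ≤ (1/600) * x^((1:ℝ)/15) := by
    have hl : ‖Real.log x‖ = Real.log x := by
      rw [Real.norm_eq_abs, abs_of_nonneg (Real.log_nonneg hx3)]
    have hr : ‖x^((1:ℝ)/15)‖ = x^((1:ℝ)/15) := by
      rw [Real.norm_eq_abs, abs_of_nonneg hrpos]
    rw [hl, hr] at hx1
    exact hx1
  have hlog2 : (0.6931471803 : ℝ) < Real.log 2 := Real.log_two_gt_d9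
  have hxx : x + 1 ≤ 2*x := by linarith
  have hlog1 : Real.log (x+1) ≤ Real.log (2*x) := Real.log_le_log (by linarith) hxx
  have hlog2x : Real.log (2*x) = Real.log 2 + Real.log x :=
    Real.log_mul (by norm_num) (ne_of_gt hx0)
  have hdiv : Real.logb 2 (x+1) ≤ 1 + Real.log x / Real.log 2 := by
    have hle : Real.log (x+1) ≤ Real.log 2 + Real.log x := by rw [← hlog2x]; exact hlog1
    calc Real.logb 2 (x+1) = Real.log (x+1) / Real.log 2 := rfl
      _ ≤ (Real.log 2 + Real.log x) / Real.log 2 := by gcongr <;> linarith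
      _ = 1 + Real.log x / Real.log 2 := by field_simp
  have hfrac : Real.log x / Real.log 2 ≤ 2 * Real.log x := by
    rw [div_le_iff₀ (by linarith)]
    nlinarith [Real.log_nonneg hx3]
  linarith

open Filter Real in
lemma F3_eventually : ∀ᶠ n : ℕ in atTop,
    (Nat.log 2 (n+1) + 1)
      * (2 + 2*⌈(n:ℝ)^((1:ℝ)/5)⌉₊*(⌈(n:ℝ)^((1:ℝ)/3)⌉₊ + 1 + 2*⌈(n:ℝ)^((1:ℝ)/5)⌉₊))
      * ((⌈(n:ℝ)^((1:ℝ)/5)⌉₊)^2 + 1) ≤ n := by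
  have hlog := tendsto_natCast_atTop_atTop.eventually real_log_bound
  have hge1 : ∀ᶠ n : ℕ in atTop, 1 ≤ n := eventually_ge_atTop 1
  filter_upwards [hlog, hge1] with n hlogn hn1
  have hx1 : (1:ℝ) ≤ (n:ℝ) := by exact_mod_cast hn1
  have hx0 : (0:ℝ) < (n:ℝ) := by linarith
  set x : ℝ := (n : ℝ) with hxdef
  set b : ℕ := ⌈x^((1:ℝ)/5)⌉₊ with hbdef
  set a : ℕ := ⌈x^((1:ℝ)/3)⌉₊ with hadef
  have hr15 : (1:ℝ) ≤ x^((1:ℝ)/5) := one_le_rpow hx1 (by norm_num)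
  have hr13 : (1:ℝ) ≤ x^((1:ℝ)/3) := one_le_rpow hx1 (by norm_num)
  have hr815 : (1:ℝ) ≤ x^((8:ℝ)/15) := one_le_rpow hx1 (by norm_num)
  have hr25 : (1:ℝ) ≤ x^((2:ℝ)/5) := one_le_rpow hx1 (by norm_num)
  have hb : (b:ℝ) ≤ 2 * x^((1:ℝ)/5) := by
    have h1 : (b:ℝ) < x^((1:ℝ)/5) + 1 := Nat.ceil_lt_add_one (rpow_nonneg hx0.le _)
    linarith
  have ha : (a:ℝ) ≤ 2 * x^((1:ℝ)/3) := by
    have h1 : (a:ℝ) < x^((1:ℝ)/3) + 1 := Nat.ceil_lt_add_one (rpow_nonneg hx0.le _)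
    linarith
  have h53 : x^((1:ℝ)/5) ≤ x^((1:ℝ)/3) := rpow_le_rpow_of_exponent_le hx1 (by norm_num)
  -- the log factor
  have hl : ((Nat.log 2 (n+1) : ℕ) : ℝ) + 1 ≤ x^((1:ℝ)/15)/150 := by
    have hp : (2:ℝ)^(Nat.log 2 (n+1) : ℕ) ≤ ((n+1 : ℕ) : ℝ) := by
      exact_mod_cast Nat.pow_log_le_self 2 (Nat.succ_ne_zero n)
    have hcast : ((n+1:ℕ):ℝ) = x + 1 := by push_cast; ring
    have hlb : ((Nat.log 2 (n+1) : ℕ) : ℝ) ≤ Real.logb 2 (x+1) := by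
      rw [← hcast]
      calc ((Nat.log 2 (n+1) : ℕ) : ℝ)
          = Real.logb 2 ((2:ℝ)^((Nat.log 2 (n+1) : ℕ) : ℝ)) :=
            (Real.logb_rpow (by norm_num) (by norm_num)).symm
        _ = Real.logb 2 ((2:ℝ)^(Nat.log 2 (n+1) : ℕ)) := by
            rw [Real.rpow_natCast]
        _ ≤ Real.logb 2 ((n+1:ℕ):ℝ) :=
            logb_le_logb_of_le (by norm_num) (by positivity) hp
    have := hlogn
    linarith
  -- the middle factor
  have hmid : ((2 + 2*b*(a+1+2*b) : ℕ) : ℝ) ≤ 30 * x^((8:ℝ)/15) := by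
    push_cast
    have hinner : (a:ℝ) + 1 + 2*(b:ℝ) ≤ 7 * x^((1:ℝ)/3) := by
      have h2b : 2*(b:ℝ) ≤ 4 * x^((1:ℝ)/3) := by linarith
      linarith
    have hbpos : (0:ℝ) ≤ (b:ℝ) := Nat.cast_nonneg b
    have hprod : 2*(b:ℝ)*((a:ℝ)+1+2*(b:ℝ)) ≤ (2*(2*x^((1:ℝ)/5))) * (7*x^((1:ℝ)/3)) := by
      apply mul_le_mul (by linarith) hinner (by positivity) (by positivity)
    have hrw : x^((1:ℝ)/5) * x^((1:ℝ)/3) = x^((8:ℝ)/15) := by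
      rw [← Real.rpow_add hx0]
      norm_num
    have : (2*(2*x^((1:ℝ)/5))) * (7*x^((1:ℝ)/3)) = 28 * (x^((1:ℝ)/5) * x^((1:ℝ)/3)) := by ring
    rw [this, hrw] at hprod
    linarith
  -- the block-count factor
  have hB : ((b^2 + 1 : ℕ) : ℝ) ≤ 5 * x^((2:ℝ)/5) := by
    push_cast
    have hsq : (b:ℝ)^2 ≤ (2 * x^((1:ℝ)/5))^2 := by
      apply pow_le_pow_left₀ (Nat.cast_nonneg b) hb
    have hrw : (x^((1:ℝ)/5))^(2:ℕ) = x^((2:ℝ)/5) := by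
      rw [← Real.rpow_natCast (x^((1:ℝ)/5)) 2, ← Real.rpow_mul hx0.le]
      norm_num
    have : (2 * x^((1:ℝ)/5))^(2:ℕ) = 4 * (x^((1:ℝ)/5))^(2:ℕ) := by ring
    rw [this, hrw] at hsq
    linarith
  -- combine
  have hfinal : (((Nat.log 2 (n+1) + 1)
      * (2 + 2*b*(a+1+2*b)) * (b^2 + 1) : ℕ) : ℝ) ≤ (n:ℝ) := by
    push_cast at hl hmid hB ⊢
    have hnn1 : (0:ℝ) ≤ ((Nat.log 2 (n+1) : ℕ) : ℝ) + 1 := by positivity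
    have hnn2 : (0:ℝ) ≤ 2 + 2*(b:ℝ)*((a:ℝ)+1+2*(b:ℝ)) := by positivity
    have hnn3 : (0:ℝ) ≤ (b:ℝ)^2 + 1 := by positivity
    have hstep1 : (((Nat.log 2 (n+1) : ℕ) : ℝ) + 1) * (2 + 2*(b:ℝ)*((a:ℝ)+1+2*(b:ℝ)))
        ≤ (x^((1:ℝ)/15)/150) * (30 * x^((8:ℝ)/15)) := by
      apply mul_le_mul hl hmid hnn2 (by positivity)
    have hstep2 : (((Nat.log 2 (n+1) : ℕ) : ℝ) + 1) * (2 + 2*(b:ℝ)*((a:ℝ)+1+2*(b:ℝ)))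
        * ((b:ℝ)^2 + 1)
        ≤ ((x^((1:ℝ)/15)/150) * (30 * x^((8:ℝ)/15))) * (5 * x^((2:ℝ)/5)) := by
      apply mul_le_mul hstep1 hB hnn3 (by positivity)
    have hsum : x^((1:ℝ)/15) * x^((8:ℝ)/15) * x^((2:ℝ)/5) = x := by
      rw [← Real.rpow_add hx0, ← Real.rpow_add hx0]
      norm_num
    have heq : ((x^((1:ℝ)/15)/150) * (30 * x^((8:ℝ)/15))) * (5 * x^((2:ℝ)/5))
        = x^((1:ℝ)/15) * x^((8:ℝ)/15) * x^((2:ℝ)/5) := by ring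
    rw [heq, hsum] at hstep2
    exact hstep2
  exact_mod_cast hfinal

end DisjProof

open DisjProof in
theorem disj_lower_bound_concrete' :
    ∃ N : ℕ, ∀ n : ℕ, N ≤ n → ∀ m kf : ℕ,
      m ≤ 2 ^ ⌈(n : ℝ) ^ ((1 : ℝ) / 3)⌉₊ → kf ≤ ⌈(n : ℝ) ^ ((1 : ℝ) / 5)⌉₊ →
      ∀ A : MP2S (MP2S.Dn n) m kf 0, ¬ MP2S.SolvesDisj n A := by
  obtain ⟨N, hN⟩ := Filter.eventually_atTop.mp F3_eventually
  refine ⟨N, ?_⟩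
  intro n hn m kf hm hkf A
  have F3 := hN n hn
  set b : ℕ := ⌈(n:ℝ)^((1:ℝ)/5)⌉₊ with hbdef
  set a : ℕ := ⌈(n:ℝ)^((1:ℝ)/3)⌉₊ with hadef
  set ℓ : ℕ := Nat.log 2 (n+1) + 1 with hldef
  set E : ℕ := 2 + 2*b*(a+1+2*b) with hEdef
  set B : ℕ := b^2 + 1 with hBdef
  set L : ℕ := n / B with hLdef
  -- F3 : ℓ * E * B ≤ n  (after definitional normalization)
  have hF3 : ℓ * E * B ≤ n := F3
  have hB0 : 0 < B := by omega
  have h2E : 2 ≤ E := by omega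
  have h1l : 1 ≤ ℓ := by omega
  have hBn : B ≤ n := by
    calc B ≤ ℓ * E * B := Nat.le_mul_of_pos_left B (by positivity)
      _ ≤ n := hF3
  have hn1 : 1 ≤ n := le_trans hB0 hBn
  have hL : 0 < L := by
    rw [hLdef]
    exact (Nat.one_le_div_iff hB0).mpr hBn
  have hBL : B * L ≤ n := by
    rw [hLdef, Nat.mul_comm]
    exact Nat.div_mul_le_self n B
  have hkB : kf * kf < B := by
    have : kf * kf ≤ b * b := Nat.mul_le_mul hkf hkf
    have hbb : b * b = b^2 := by ring
    omega
  -- the counting inequality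
  set X : ℕ := m * (n+1)^(2*kf) + 1 with hXdef
  have h2n1 : 2 ≤ n + 1 := by omega
  have hX : X ≤ (n+1)^(a+1+2*b) := by
    have hma : m ≤ (n+1)^a :=
      le_trans hm (Nat.pow_le_pow_left h2n1 a)
    have hpw : (n+1)^(2*kf) ≤ (n+1)^(2*b) :=
      Nat.pow_le_pow_right (by omega) (by omega)
    have h1 : m * (n+1)^(2*kf) ≤ (n+1)^(a+2*b) := by
      rw [pow_add]
      exact Nat.mul_le_mul hma hpw
    have h2 : (1:ℕ) ≤ (n+1)^(a+2*b) := Nat.one_le_pow _ _ (by omega)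
    have h3 : X ≤ 2 * (n+1)^(a+2*b) := by omega
    calc X ≤ 2 * (n+1)^(a+2*b) := h3
      _ ≤ (n+1) * (n+1)^(a+2*b) := Nat.mul_le_mul_right _ h2n1
      _ = (n+1)^(a+2*b+1) := by rw [pow_succ]; ring
      _ = (n+1)^(a+1+2*b) := by congr 1; omega
  have hcore : B * X^(2*kf) < 2^L := by
    have hx1 : X^(2*kf) ≤ (n+1)^(2*b*(a+1+2*b)) := by
      calc X^(2*kf) ≤ ((n+1)^(a+1+2*b))^(2*kf) :=
            Nat.pow_le_pow_left hX _
        _ = (n+1)^((a+1+2*b)*(2*kf)) := by rw [← pow_mul]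
        _ ≤ (n+1)^(2*b*(a+1+2*b)) := by
            apply Nat.pow_le_pow_right (by omega)
            calc (a+1+2*b)*(2*kf) ≤ (a+1+2*b)*(2*b) :=
                  Nat.mul_le_mul_left _ (by omega)
              _ = 2*b*(a+1+2*b) := by ring
    have hx2 : B ≤ (n+1)^2 := by
      have : (n+1)^2 = n*n + 2*n + 1 := by ring
      omega
    have hx3 : B * X^(2*kf) ≤ (n+1)^E := by
      calc B * X^(2*kf) ≤ (n+1)^2 * (n+1)^(2*b*(a+1+2*b)) :=
            Nat.mul_le_mul hx2 hx1
        _ = (n+1)^E := by rw [← pow_add]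
    have hx4 : (n+1)^E < 2^(ℓ*E) := by
      have hlt : n+1 < 2^ℓ := Nat.lt_pow_succ_log_self (by norm_num) (n+1)
      calc (n+1)^E < (2^ℓ)^E := Nat.pow_lt_pow_left hlt (by omega)
        _ = 2^(ℓ*E) := by rw [← pow_mul]
    have hx5 : ℓ*E ≤ L := by
      rw [hLdef]
      exact (Nat.le_div_iff_mul_le hB0).mpr hF3
    calc B * X^(2*kf) ≤ (n+1)^E := hx3
      _ < 2^(ℓ*E) := hx4
      _ ≤ 2^L := Nat.pow_le_pow_right (by norm_num) hx5
  have hcount : B * (2^(n-L) * (X^kf * X^kf)) < 2^n := by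
    have hXX : X^kf * X^kf = X^(2*kf) := by
      rw [← pow_add]
      congr 1
      omega
    have hLn : L ≤ n := Nat.div_le_self n B
    calc B * (2^(n-L) * (X^kf * X^kf)) = 2^(n-L) * (B * X^(2*kf)) := by rw [hXX]; ring
      _ < 2^(n-L) * 2^L := by
          have h2p : 0 < 2^(n-L) := by positivity
          exact (Nat.mul_lt_mul_left h2p).mpr hcore
      _ = 2^(n-L+L) := by rw [pow_add]
      _ = 2^n := by congr 1; omega
  exact no_solver B L hL hBL hkB A hcount
/-- For all sufficiently large integers `n`, no mp2s-automaton over the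
data set `D_n` with at most `2^⌈n^(1/3)⌉` states, at most `⌈n^(1/5)⌉` forward heads on
each of the two input streams, and no backward heads solves the set disjointness problem
`Disj_n`. -/
theorem disj_lower_bound_concrete :
    ∃ N : ℕ, ∀ n : ℕ, N ≤ n → ∀ m kf : ℕ,
      m ≤ 2 ^ ⌈(n : ℝ) ^ ((1 : ℝ) / 3)⌉₊ → kf ≤ ⌈(n : ℝ) ^ ((1 : ℝ) / 5)⌉₊ →
      ∀ A : MP2S (MP2S.Dn n) m kf 0, ¬ MP2S.SolvesDisj n A :=
  disj_lower_bound_concrete'
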